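/- arXiv:1710.00780 — 4 statements merged into one kernel-verified Lean document; each statement's English description precedes it below -/
import Mathlib

section
/- A fixed point of a standard interference function is unique: if f is a standard interference function and x = f(x), y = f(y), then x = y. -/
lemma sif_fixed_point_le {k : ℕ} (f : (Fin k → ℝ) → (Fin k → ℝ))
    (hpos : ∀ x : Fin k → ℝ, 0 ≤ x → ∀ i, 0 < f x i)
    (hmono : ∀ x y : Fin k → ℝ, 0 ≤ x → x ≤ y → f x ≤ f y)
    (hscal : ∀ α : ℝ, 1 < α → ∀ x : Fin k → ℝ, 0 ≤ x → ∀ i, f (α • x) i < α * f x i)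
    (x y : Fin k → ℝ) (hx : 0 ≤ x) (hy : 0 ≤ y)
    (hfx : f x = x) (hfy : f y = y) : y ≤ x := by
  have hxpos : ∀ i, 0 < x i := fun i => hfx ▸ hpos x hx i
  by_contra h
  rw [Pi.le_def] at h
  push_neg at h
  obtain ⟨i, hi⟩ := h
  have hne : (Finset.univ : Finset (Fin k)).Nonempty := ⟨i, Finset.mem_univ i⟩
  set g : Fin k → ℝ := fun j => y j / x j with hg
  set β : ℝ := Finset.univ.sup' hne g with hβ
  have hβ1 : 1 < β := by
    have h1 : 1 < g i := (one_lt_div (hxpos i)).mpr hi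
    exact lt_of_lt_of_le h1 (Finset.le_sup' g (Finset.mem_univ i))
  have hβ0 : 0 ≤ β := le_of_lt (lt_trans one_pos hβ1)
  have hβx : (0 : Fin k → ℝ) ≤ β • x := fun j => by
    simpa using mul_nonneg hβ0 (hx j)
  have hyle : y ≤ β • x := by
    intro j
    have : g j ≤ β := Finset.le_sup' g (Finset.mem_univ j)
    have := (div_le_iff₀ (hxpos j)).mp this
    simpa [mul_comm] using this
  obtain ⟨i0, _, hi0⟩ := Finset.exists_mem_eq_sup' hne g
  have hyi0 : y i0 = β * x i0 := by
    have : g i0 = β := hi0.symm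
    rw [hg] at this
    exact (div_eq_iff (hxpos i0).ne').mp this
  have h1 : y i0 ≤ f (β • x) i0 := by
    calc y i0 = f y i0 := by rw [hfy]
    _ ≤ f (β • x) i0 := hmono y (β • x) hy hyle i0
  have h2 : f (β • x) i0 < β * f x i0 := hscal β hβ1 x hx i0
  have h3 : β * f x i0 = β * x i0 := by rw [hfx]
  linarith [hyi0]

/-- A fixed point of a standard interference function is unique. -/
theorem sif_fixed_point_unique {k : ℕ} (f : (Fin k → ℝ) → (Fin k → ℝ))
    (hpos : ∀ x : Fin k → ℝ, 0 ≤ x → ∀ i, 0 < f x i)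
    (hmono : ∀ x y : Fin k → ℝ, 0 ≤ x → x ≤ y → f x ≤ f y)
    (hscal : ∀ α : ℝ, 1 < α → ∀ x : Fin k → ℝ, 0 ≤ x → ∀ i, f (α • x) i < α * f x i)
    (x y : Fin k → ℝ) (hx : 0 ≤ x) (hy : 0 ≤ y)
    (hfx : f x = x) (hfy : f y = y) : x = y :=
  le_antisymm
    (sif_fixed_point_le f hpos hmono hscal y x hy hx hfy hfx)
    (sif_fixed_point_le f hpos hmono hscal x y hx hy hfx hfy)
end

section
/- If f is a standard interference function and there exists a feasible point z with z ≥ f(z), then the sequence defined by x⁽⁰⁾ = z, x⁽ᵗ⁺¹⁾ = f(x⁽ᵗ⁾) is componentwise nonincreasing and bounded below by 0, hence convergent. -/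
/-- Starting from a feasible point, the fixed-point iteration of a standard
interference function is componentwise nonincreasing, bounded below by 0,
and convergent. -/
theorem sif_iteration_monotone_convergent {k : ℕ} (f : (Fin k → ℝ) → (Fin k → ℝ))
    (hpos : ∀ x : Fin k → ℝ, 0 ≤ x → ∀ i, 0 < f x i)
    (hmono : ∀ x y : Fin k → ℝ, 0 ≤ x → x ≤ y → f x ≤ f y)
    (hscal : ∀ α : ℝ, 1 < α → ∀ x : Fin k → ℝ, 0 ≤ x → ∀ i, f (α • x) i < α * f x i)
    (z : Fin k → ℝ) (hz : 0 ≤ z) (hfeas : f z ≤ z) :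
    (∀ n : ℕ, f^[n + 1] z ≤ f^[n] z) ∧ (∀ n : ℕ, 0 ≤ f^[n] z) ∧
      ∃ L : Fin k → ℝ, Filter.Tendsto (fun n => f^[n] z) Filter.atTop (nhds L) := by
  have key : ∀ n : ℕ, 0 ≤ f^[n] z ∧ f^[n + 1] z ≤ f^[n] z := by
    intro n
    induction n with
    | zero => exact ⟨hz, by simpa using hfeas⟩
    | succ n ih =>
      obtain ⟨h0, hdec⟩ := ih
      have h0' : 0 ≤ f^[n + 1] z := by
        rw [Function.iterate_succ_apply']
        exact fun i => (hpos _ h0 i).le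
      refine ⟨h0', ?_⟩
      have h2 := hmono _ _ h0' hdec
      simpa only [← Function.iterate_succ_apply' f] using h2
  refine ⟨fun n => (key n).2, fun n => (key n).1, ?_⟩
  have : ∀ i, ∃ Li : ℝ, Filter.Tendsto (fun n => f^[n] z i) Filter.atTop (nhds Li) := by
    intro i
    have hanti : Antitone fun n => f^[n] z i :=
      antitone_nat_of_succ_le fun n => (key n).2 i
    have hbdd : BddBelow (Set.range fun n => f^[n] z i) :=
      ⟨0, by rintro x ⟨n, rfl⟩; exact (key n).1 i⟩
    exact ⟨_, tendsto_atTop_ciInf hanti hbdd⟩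
  choose L hL using this
  exact ⟨L, tendsto_pi_nhds.mpr hL⟩
end

section
/- For a standard interference function f and a monotone, degree-1 homogeneous function g with g > 0 on positive vectors, the pair (w*, ρ*) with w* = ρ*·f(w*) and g(w*) = 1 is optimal for the max-min problem: for any w ≥ 0 with g(w) ≤ 1 and any ρ ≥ 0 with w ≥ ρ·f(w), we have ρ ≤ ρ*. -/
/-- The normalized fixed point is optimal for the max-min problem:
any feasible (w, ρ) satisfies ρ ≤ ρ*. -/
theorem max_min_optimality {S : ℕ}
    (f : (Fin S → ℝ) → (Fin S → ℝ)) (g : (Fin S → ℝ) → ℝ)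
    (hfpos : ∀ w : Fin S → ℝ, 0 ≤ w → ∀ s, 0 < f w s)
    (hfmono : ∀ w w' : Fin S → ℝ, 0 ≤ w → w ≤ w' → f w ≤ f w')
    (hfscal : ∀ α : ℝ, 1 < α → ∀ w : Fin S → ℝ, 0 ≤ w → ∀ s, f (α • w) s < α * f w s)
    (hgmono : ∀ x y : Fin S → ℝ, 0 ≤ x → x ≤ y → g x ≤ g y)
    (hghom : ∀ α : ℝ, 0 < α → ∀ x : Fin S → ℝ, g (α • x) = α * g x)
    (hgpos : ∀ x : Fin S → ℝ, 0 ≤ x → x ≠ 0 → 0 < g x)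
    (wstar : Fin S → ℝ) (ρstar : ℝ) (hwstar : 0 ≤ wstar) (hρstar : 0 < ρstar)
    (hfix : wstar = ρstar • f wstar) (hg1 : g wstar = 1) :
    ∀ (w : Fin S → ℝ) (ρ : ℝ), 0 ≤ w → g w ≤ 1 → 0 ≤ ρ →
      (∀ s, ρ * f w s ≤ w s) → ρ ≤ ρstar := by
  intro w ρ hw hgw hρ hfeas
  by_contra hcon
  push_neg at hcon
  have hρpos : 0 < ρ := hρstar.trans hcon
  have hwpos : ∀ s, 0 < w s := fun s =>
    lt_of_lt_of_le (mul_pos hρpos (hfpos w hw s)) (hfeas s)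
  have hg0 : g 0 = 0 := by
    have h2 := hghom 2 (by norm_num) 0
    rw [smul_zero] at h2
    linarith
  have hS : Nonempty (Fin S) := by
    by_contra hS
    have hz : wstar = 0 := funext fun s => (hS ⟨s⟩).elim
    rw [hz, hg0] at hg1
    norm_num at hg1
  have hfixpt : ∀ s, wstar s = ρstar * f wstar s := by
    intro s
    conv_lhs => rw [hfix]
    simp [smul_eq_mul]
  have hwstarpos : ∀ s, 0 < wstar s := by
    intro s
    rw [hfixpt s]
    exact mul_pos hρstar (hfpos wstar hwstar s)
  have hne : (Finset.univ : Finset (Fin S)).Nonempty := Finset.univ_nonempty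
  set β := Finset.univ.sup' hne (fun s => wstar s / w s) with hβdef
  obtain ⟨s0, _, hs0⟩ := Finset.exists_mem_eq_sup' hne (fun s => wstar s / w s)
  rw [← hβdef] at hs0
  have hβle : ∀ s, wstar s ≤ β * w s := by
    intro s
    have h1 : wstar s / w s ≤ β := by
      rw [hβdef]
      exact Finset.le_sup' (fun s => wstar s / w s) (Finset.mem_univ s)
    rw [div_le_iff₀ (hwpos s)] at h1
    linarith
  have hβs0 : wstar s0 = β * w s0 := by
    rw [hs0]
    field_simp [(hwpos s0).ne']
  have hβpos : 0 < β := by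
    rw [hs0]
    exact div_pos (hwstarpos s0) (hwpos s0)
  have hβlew : wstar ≤ β • w := by
    intro s
    simpa [smul_eq_mul] using hβle s
  have hβ1 : 1 ≤ β := by
    have h2 : g wstar ≤ g (β • w) := hgmono _ _ hwstar hβlew
    rw [hghom β hβpos, hg1] at h2
    nlinarith
  have hfβ : f (β • w) s0 ≤ β * f w s0 := by
    rcases eq_or_lt_of_le hβ1 with he | hl
    · rw [← he, one_smul, one_mul]
    · exact le_of_lt (hfscal β hl w hw s0)
  have key : wstar s0 < wstar s0 := by
    calc wstar s0 = ρstar * f wstar s0 := hfixpt s0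
      _ ≤ ρstar * f (β • w) s0 :=
          mul_le_mul_of_nonneg_left (hfmono wstar (β • w) hwstar hβlew s0) hρstar.le
      _ ≤ ρstar * (β * f w s0) := mul_le_mul_of_nonneg_left hfβ hρstar.le
      _ < ρ * (β * f w s0) := by
          apply mul_lt_mul_of_pos_right hcon
          exact mul_pos hβpos (hfpos w hw s0)
      _ = β * (ρ * f w s0) := by ring
      _ ≤ β * w s0 := mul_le_mul_of_nonneg_left (hfeas s0) hβpos.le
      _ = wstar s0 := hβs0.symm
  exact absurd key (lt_irrefl _)
end

section
/- The per-service allocation function f_s(w) = d_s / (δ·W·log(1 + SINR_s(w))), where SINR_s(w) = p_s / ([Ṽᵀ diag(w) p]_s + σ̃_s) with Ṽ nonnegative, p positive, σ̃ positive, and d_s > 0, is a standard interference function of w: it is monotone increasing and scalable (α·f_s(w) > f_s(αw) for α > 1). -/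
/-!
The allocation is `d / (δ W φ(x))` with `φ(x) = log (1 + p / (x + σ))` evaluated at the interference
`x = [Ṽᵀ diag(w) p]_s`, which is nonnegative, monotone and linear in `w`. Monotonicity follows since
`φ` is positive and decreasing. For scalability, `p / (x + σ) < α p / (α x + σ)` because `σ > 0`, and
Bernoulli's inequality `1 + α t ≤ (1 + t) ^ α` gives `log (1 + α t) ≤ α log (1 + t)`; together
`φ(x) < α φ(α x)`, which is exactly `f(α w) < α f(w)` after taking reciprocals.
-/

open Finset Real

section Interference

variable {ι : Type*} [Fintype ι] (V : Matrix ι ι ℝ) (p : ι → ℝ)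

def interference (w : ι → ℝ) (s : ι) : ℝ := ∑ l, V l s * p l * w l

variable {V p}

lemma interference_nonneg (hV : ∀ l s, 0 ≤ V l s) (hp : 0 ≤ p) {w : ι → ℝ} (hw : 0 ≤ w)
    (s : ι) : 0 ≤ interference V p w s :=
  sum_nonneg fun l _ => mul_nonneg (mul_nonneg (hV l s) (hp l)) (hw l)

lemma interference_mono (hV : ∀ l s, 0 ≤ V l s) (hp : 0 ≤ p) {w w' : ι → ℝ} (h : w ≤ w')
    (s : ι) : interference V p w s ≤ interference V p w' s :=
  sum_le_sum fun l _ => mul_le_mul_of_nonneg_left (h l) (mul_nonneg (hV l s) (hp l))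

lemma interference_smul (α : ℝ) (w : ι → ℝ) (s : ι) :
    interference V p (α • w) s = α * interference V p w s := by
  simp only [interference, mul_sum, Pi.smul_apply, smul_eq_mul]
  exact sum_congr rfl fun _ _ => by ring

end Interference

lemma Real.log_one_add_mul_le_mul_log_one_add {t α : ℝ} (ht : 0 ≤ t) (hα : 1 ≤ α) :
    log (1 + α * t) ≤ α * log (1 + t) := by
  calc log (1 + α * t) ≤ log ((1 + t) ^ α) :=
        log_le_log (by positivity) (one_add_mul_self_le_rpow_one_add (by linarith) hα)
    _ = α * log (1 + t) := log_rpow (by linarith) α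

section SpectralEfficiency

variable {a σ : ℝ} (ha : 0 < a) (hσ : 0 < σ)
include ha hσ

lemma log_one_add_div_add_pos {x : ℝ} (hx : 0 ≤ x) : 0 < log (1 + a / (x + σ)) :=
  log_pos (lt_add_of_pos_right 1 (by positivity))

lemma antitoneOn_log_one_add_div_add :
    AntitoneOn (fun x => log (1 + a / (x + σ))) (Set.Ici 0) := by
  intro x (hx : 0 ≤ x) y (hy : 0 ≤ y) hxy
  exact log_le_log (by positivity) (by gcongr)

lemma log_one_add_div_add_lt_mul {α x : ℝ} (hα : 1 < α) (hx : 0 ≤ x) :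
    log (1 + a / (x + σ)) < α * log (1 + a / (α * x + σ)) := by
  have hαx : 0 < α * x + σ := by positivity
  have hSINR : a / (x + σ) < α * (a / (α * x + σ)) := by
    rw [← mul_div_assoc, div_lt_div_iff₀ (by positivity) hαx]
    nlinarith [mul_pos ha hσ]
  calc log (1 + a / (x + σ)) < log (1 + α * (a / (α * x + σ))) :=
        log_lt_log (by positivity) (by linarith)
    _ ≤ α * log (1 + a / (α * x + σ)) :=
        log_one_add_mul_le_mul_log_one_add (by positivity) hα.le

end SpectralEfficiency

lemma div_lt_mul_div_of_lt_mul {k u v α : ℝ} (hk : 0 < k) (hu : 0 < u) (hv : 0 < v)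
    (h : u < α * v) : k / v < α * (k / u) := by
  rw [← mul_div_assoc, div_lt_div_iff₀ hv hu]
  nlinarith

/-- The per-service resource allocation function
f_s(w) = d_s / (δ·W·log(1 + SINR_s(w))) is a standard interference function:
monotone and scalable. -/
theorem allocation_is_sif {S : ℕ} (V : Matrix (Fin S) (Fin S) ℝ)
    (p σ d : Fin S → ℝ) (δ W : ℝ)
    (hV : ∀ l s, 0 ≤ V l s) (hp : ∀ s, 0 < p s) (hσ : ∀ s, 0 < σ s)
    (hd : ∀ s, 0 < d s) (hδ : 0 < δ) (hW : 0 < W) :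
    let SINR : (Fin S → ℝ) → Fin S → ℝ :=
      fun w s => p s / ((∑ l, V l s * p l * w l) + σ s)
    let f : (Fin S → ℝ) → Fin S → ℝ :=
      fun w s => d s / (δ * W * Real.log (1 + SINR w s))
    (∀ w w' : Fin S → ℝ, 0 ≤ w → w ≤ w' → ∀ s, f w s ≤ f w' s) ∧
    (∀ α : ℝ, 1 < α → ∀ w : Fin S → ℝ, 0 ≤ w → ∀ s, f (α • w) s < α * f w s) := by
  intro SINR f
  have hf : ∀ w s, f w s = d s / (δ * W * log (1 + p s / (interference V p w s + σ s))) :=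
    fun _ _ => rfl
  have hc : 0 < δ * W := mul_pos hδ hW
  have hp' : 0 ≤ p := fun l => (hp l).le
  refine ⟨fun w w' hw hww' s => ?_, fun α hα w hw s => ?_⟩
  · have hI := interference_nonneg hV hp' hw s
    have hI' := interference_nonneg hV hp' (hw.trans hww') s
    rw [hf, hf]
    refine div_le_div_of_nonneg_left (hd s).le
      (mul_pos hc (log_one_add_div_add_pos (hp s) (hσ s) hI')) ?_
    exact mul_le_mul_of_nonneg_left
      (antitoneOn_log_one_add_div_add (hp s) (hσ s) hI hI' (interference_mono hV hp' hww' s))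
      hc.le
  · have hI := interference_nonneg hV hp' hw s
    have hαI : 0 ≤ α * interference V p w s := mul_nonneg (by linarith) hI
    rw [hf, hf, interference_smul]
    refine div_lt_mul_div_of_lt_mul (hd s)
      (mul_pos hc (log_one_add_div_add_pos (hp s) (hσ s) hI))
      (mul_pos hc (log_one_add_div_add_pos (hp s) (hσ s) hαI)) ?_
    rw [mul_left_comm]
    exact mul_lt_mul_of_pos_left (log_one_add_div_add_lt_mul (hp s) (hσ s) hα hI) hc
end
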